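/- arXiv:2105.11799 — 2 statements merged into one kernel-verified Lean document; each statement's English description precedes it below -/
import Mathlib

section
/- Under the standing setup, for every vertex v ∈ V(G) ∖ V(C), either v is almost C-dominating, or |N_G(v) ∩ V(C)| ≤ 3 and the vertices of N_G(v) ∩ V(C) are consecutive along C (i.e. they are the vertex set of a subpath of C on at most 3 vertices). -/
open SimpleGraph

variable {V : Type}

/-- The graph `G − S`: delete the vertices in `S` (keep the same vertex type; deleted
vertices become isolated). -/
def SimpleGraph.del (G : SimpleGraph V) (S : Set V) : SimpleGraph V where
  Adj x y := G.Adj x y ∧ x ∉ S ∧ y ∉ S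
  symm := by
    constructor
    intro x y h
    exact ⟨h.1.symm, h.2.2, h.2.1⟩
  loopless := by
    constructor
    intro x h
    exact G.irrefl h.1

theorem SimpleGraph.del_le (G : SimpleGraph V) (S : Set V) : G.del S ≤ G := by
  intro x y h
  exact h.1

/-- The closed neighborhood `N_G[S]` of a set of vertices. -/
def closedNbhd (G : SimpleGraph V) (S : Set V) : Set V :=
  S ∪ {x | ∃ s ∈ S, G.Adj x s}

/-- A hole: an induced (chordless) cycle of length at least 4, given as a closed walk. -/
def IsHoleW (G : SimpleGraph V) {v : V} (w : G.Walk v v) : Prop :=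
  w.IsCycle ∧ 4 ≤ w.length ∧
    ∀ x ∈ w.support, ∀ y ∈ w.support, G.Adj x y → w.toSubgraph.Adj x y

/-- A long hole: an induced (chordless) cycle of length at least 6. -/
def IsLongHoleW (G : SimpleGraph V) {v : V} (w : G.Walk v v) : Prop :=
  w.IsCycle ∧ 6 ≤ w.length ∧
    ∀ x ∈ w.support, ∀ y ∈ w.support, G.Adj x y → w.toSubgraph.Adj x y

/-- A graph is `C4`-free if it has no induced cycle of length 4. -/
def C4Free (G : SimpleGraph V) : Prop :=
  ¬ ∃ (v : V) (w : G.Walk v v), w.IsCycle ∧ w.length = 4 ∧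
      ∀ x ∈ w.support, ∀ y ∈ w.support, G.Adj x y → w.toSubgraph.Adj x y

def NoLongHole (G : SimpleGraph V) : Prop :=
  ∀ (v : V) (w : G.Walk v v), ¬ IsLongHoleW G w

def NoHole (G : SimpleGraph V) : Prop :=
  ∀ (v : V) (w : G.Walk v v), ¬ IsHoleW G w

/-- `s_k = 4k(log k + log log k + 4)` for `k ≥ 2`, and `s_1 = 2`. -/
noncomputable def sK (k : ℕ) : ℝ :=
  if 2 ≤ k then 4 * k * (Real.log k + Real.log (Real.log k) + 4) else 2

/-- `μ_k = 88575 k + 24003 s_k`. -/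
noncomputable def muK (k : ℕ) : ℝ := 88575 * k + 24003 * sK k

/-- `G` contains `k` pairwise vertex-disjoint long holes. -/
def HasLongHolePacking (G : SimpleGraph V) (k : ℕ) : Prop :=
  ∃ (a : Fin k → V) (w : (i : Fin k) → G.Walk (a i) (a i)),
    (∀ i, IsLongHoleW G (w i)) ∧
    ∀ i j, i ≠ j → ∀ x ∈ (w i).support, x ∉ (w j).support

/-- `G` contains `k` pairwise vertex-disjoint holes. -/
def HasHolePacking (G : SimpleGraph V) (k : ℕ) : Prop :=
  ∃ (a : Fin k → V) (w : (i : Fin k) → G.Walk (a i) (a i)),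
    (∀ i, IsHoleW G (w i)) ∧
    ∀ i j, i ≠ j → ∀ x ∈ (w i).support, x ∉ (w j).support

/-- The distance between two vertices measured in the cycle `C` (given as a closed walk `c`). -/
noncomputable def distW (G : SimpleGraph V) {v0 : V} (c : G.Walk v0 v0) (x y : V) : ℕ :=
  c.toSubgraph.spanningCoe.dist x y

/-- A vertex `u ∉ V(C)` is almost `C`-dominating: it has at least two neighbors on `C`, and
its neighbors on `C` can be enumerated cyclically so that consecutive ones are at
`C`-distance 1 or 3. -/
def AlmostDom (G : SimpleGraph V) {v0 : V} (c : G.Walk v0 v0) (u : V) : Prop :=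
  u ∉ c.support ∧
  ∃ l : List V, l.Nodup ∧ 2 ≤ l.length ∧
    (∀ x, x ∈ l ↔ x ∈ c.support ∧ G.Adj u x) ∧
    ∀ i : Fin l.length,
      distW G c (l.get i) (l.get ⟨((i : ℕ) + 1) % l.length, Nat.mod_lt _ i.pos⟩)
        ∈ ({1, 3} : Set ℕ)

/-- Data for an ear decomposition of a subgraph of `G`: `n` ears, the `i`-th one being a
walk from `A i` to `B i`. -/
structure EarData (G : SimpleGraph V) : Type _ where
  n : ℕ
  A : Fin n → V
  B : Fin n → V
  ear : (i : Fin n) → G.Walk (A i) (B i)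

/-- The subgraph `C ∪ P_1 ∪ ⋯ ∪ P_j` (ears of index `< j`). -/
def EarData.prev {G : SimpleGraph V} (d : EarData G) {v0 : V} (c : G.Walk v0 v0) (j : ℕ) :
    G.Subgraph :=
  c.toSubgraph ⊔ ⨆ i : Fin d.n, ⨆ _ : (i : ℕ) < j, (d.ear i).toSubgraph

/-- The subgraph `C ∪ P_1 ∪ ⋯ ∪ P_ℓ`. -/
def EarData.whole {G : SimpleGraph V} (d : EarData G) {v0 : V} (c : G.Walk v0 v0) :
    G.Subgraph :=
  d.prev c d.n

/-- A subgraph has maximum degree at most 3. -/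
def MaxDeg3 {G : SimpleGraph V} (H : G.Subgraph) : Prop :=
  ∀ v : V, (H.neighborSet v).ncard ≤ 3

/-- `p` qualifies as an ear attached to the subgraph `H` (relative to the cycle `c`):
`p = p_0 ⋯ p_m` is a path of length `m ≥ 6` with `p_0 ∈ V(C)`, its other end in `H`,
all internal vertices outside `H`, `p − {p_0, p_m}` induced in `G`, and no vertex of
`{p_2, p_3, p_4}` has a neighbor in `H`. -/
def IsEarOf (G : SimpleGraph V) {v0 : V} (c : G.Walk v0 v0) (H : G.Subgraph)
    {a b : V} (p : G.Walk a b) : Prop :=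
  p.IsPath ∧ 6 ≤ p.length ∧ a ∈ c.support ∧ b ∈ H.verts ∧
  (∀ x ∈ p.support, x ≠ a → x ≠ b → x ∉ H.verts) ∧
  (∀ x ∈ p.support, x ≠ a → x ≠ b → ∀ y ∈ p.support, y ≠ a → y ≠ b →
      G.Adj x y → p.toSubgraph.Adj x y) ∧
  (∀ j ∈ ({2, 3, 4} : Set ℕ), ∀ y ∈ H.verts, ¬ G.Adj (p.getVert j) y)

/-- `d` is a sparse ear decomposition in `G` (relative to the cycle `c`). -/
def IsSED (G : SimpleGraph V) {v0 : V} (c : G.Walk v0 v0) (d : EarData G) : Prop :=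
  MaxDeg3 (d.whole c) ∧ ∀ i : Fin d.n, IsEarOf G c (d.prev c (i : ℕ)) (d.ear i)

/-- The path `p` extends the sparse ear decomposition `d`: adding `p` as a new ear again
gives a sparse ear decomposition. -/
def ExtendsSED (G : SimpleGraph V) {v0 : V} (c : G.Walk v0 v0) (d : EarData G)
    {a b : V} (p : G.Walk a b) : Prop :=
  IsEarOf G c (d.whole c) p ∧ MaxDeg3 (d.whole c ⊔ p.toSubgraph)

/-- A good sparse ear decomposition: each ear extends the previous partial decomposition,
meets `C` in as many vertices as possible, and subject to that is shortest. -/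
def GoodSED (G : SimpleGraph V) {v0 : V} (c : G.Walk v0 v0) (d : EarData G) : Prop :=
  IsSED G c d ∧ ∀ i : Fin d.n,
    (∀ (x y : V) (q : G.Walk x y),
        IsEarOf G c (d.prev c (i : ℕ)) q → MaxDeg3 (d.prev c (i : ℕ) ⊔ q.toSubgraph) →
          ({z | z ∈ q.support ∧ z ∈ c.support}).ncard ≤
            ({z | z ∈ (d.ear i).support ∧ z ∈ c.support}).ncard) ∧
    (∀ (x y : V) (q : G.Walk x y),
        IsEarOf G c (d.prev c (i : ℕ)) q → MaxDeg3 (d.prev c (i : ℕ) ⊔ q.toSubgraph) →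
          ({z | z ∈ q.support ∧ z ∈ c.support}).ncard =
            ({z | z ∈ (d.ear i).support ∧ z ∈ c.support}).ncard →
          (d.ear i).length ≤ q.length)

/-- An appendage of the sparse ear decomposition `d`: a cycle `F = v_0 v_1 ⋯ v_n v_0`
(`n ≥ 5`) whose tip `v_0 = t` is a non-branching vertex of `C`, meeting the decomposition
only in `t`, with `v_1 ⋯ v_n` induced in `G` and no vertex of `{v_2, v_3, v_4}` having a
neighbor in the decomposition. -/
def IsAppendage (G : SimpleGraph V) {v0 : V} (c : G.Walk v0 v0) (d : EarData G)
    {t : V} (F : G.Walk t t) : Prop :=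
  F.IsCycle ∧ 6 ≤ F.length ∧ t ∈ c.support ∧
  ((d.whole c).neighborSet t).ncard ≠ 3 ∧
  (∀ x ∈ F.support, x ∈ (d.whole c).verts → x = t) ∧
  (∀ x ∈ F.support, x ≠ t → ∀ y ∈ F.support, y ≠ t → G.Adj x y → F.toSubgraph.Adj x y) ∧
  (∀ j ∈ ({2, 3, 4} : Set ℕ), ∀ y ∈ (d.whole c).verts, ¬ G.Adj (F.getVert j) y)

/-- `S^r_v`: the set of vertices at distance at most `r` from `v ∈ V(C)` in the graph
`G − (D ∪ (V(C) ∖ {v}))`, where `D` is the set of almost `C`-dominating vertices. -/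
def Sball (G : SimpleGraph V) {v0 : V} (c : G.Walk v0 v0) (r : ℕ) (v : V) : Set V :=
  {x | ∃ p : (G.del ({u | AlmostDom G c u} ∪ ({y | y ∈ c.support} \ {v}))).Walk v x,
        p.length ≤ r}

/-- `S^r_X = ⋃_{v ∈ X} S^r_v`. -/
def SsetOf (G : SimpleGraph V) {v0 : V} (c : G.Walk v0 v0) (r : ℕ) (X : Set V) : Set V :=
  ⋃ v ∈ X, Sball G c r v

/-!
Index the long hole `C` cyclically and look at two cyclically consecutive neighbours of `v` on
`C`, at distance `q` along `C`. If `2 ≤ q ≤ |C| - 3`, then `v` together with the arc of `C` between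
them is an induced cycle of length `q + 2 < |C|`: a `C4` when `q = 2`, and a long hole shorter
than `C` when `q ≥ 4`. Hence every such gap is `1`, `3` or at least `|C| - 2`. If all gaps are
`1` or `3`, then `v` is almost `C`-dominating. Otherwise all neighbours of `v` lie in a window of
three consecutive vertices of `C`, and since no gap equals `2` they span a subpath of `C`.
-/

theorem List.exists_cyclic_gap {n : ℕ} {l : List ℕ} (hl : l.Pairwise (· < ·))
    (hn : ∀ r ∈ l, r < n) (i : ℕ) (hi : i < l.length) :
    ∃ q, 0 < q ∧ (l[i] + q) % n = l[(i + 1) % l.length]'(Nat.mod_lt _ (by omega)) ∧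
      ∀ t, 0 < t → t < q → (l[i] + t) % n ∉ l := by
  have hlt : ∀ a b (ha : a < l.length) (hb : b < l.length), l[a] < l[b] → a < b := by
    intro a b ha hb h
    by_contra! hba
    rcases hba.lt_or_eq with hba | rfl
    · exact absurd (List.pairwise_iff_getElem.mp hl b a hb ha hba) (by omega)
    · omega
  have hin : ∀ k (hk : k < l.length), l[k] < n := fun k hk => hn _ (List.getElem_mem hk)
  have hi' := hin i hi
  rcases Nat.lt_or_ge (i + 1) l.length with hi1 | hi1
  · simp only [Nat.mod_eq_of_lt hi1]
    have hi1n := hin _ hi1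
    have hii := List.pairwise_iff_getElem.mp hl i (i + 1) hi hi1 (by omega)
    refine ⟨l[i + 1] - l[i], by omega, by rw [Nat.add_sub_cancel' hii.le, Nat.mod_eq_of_lt hi1n],
      fun t ht0 htq hmem => ?_⟩
    rw [Nat.mod_eq_of_lt (by omega)] at hmem
    obtain ⟨k, hk, hkt⟩ := List.mem_iff_getElem.mp hmem
    have := hlt i k hi hk (by omega)
    have := hlt k (i + 1) hk hi1 (by omega)
    omega
  · have hlen : i + 1 = l.length := by omega
    have h0 : 0 < l.length := by omega
    simp only [hlen, Nat.mod_self]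
    refine ⟨n - l[i] + l[0], by omega, ?_, fun t ht0 htq hmem => ?_⟩
    · rw [show l[i] + (n - l[i] + l[0]) = l[0] + n by omega, Nat.add_mod_right,
        Nat.mod_eq_of_lt (hin 0 h0)]
    obtain ⟨k, hk, hkt⟩ := List.mem_iff_getElem.mp hmem
    rcases Nat.lt_or_ge (l[i] + t) n with hlt' | hge
    · rw [Nat.mod_eq_of_lt hlt'] at hkt
      have := hlt i k hi hk (by omega)
      omega
    · have := hin 0 h0
      rw [Nat.mod_eq_sub_mod hge, Nat.mod_eq_of_lt (show l[i] + t - n < n by omega)] at hkt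
      have := hlt k 0 hk h0 (by omega)
      omega

namespace SimpleGraph

def seqWalk (G : SimpleGraph V) (f : ℕ → V) (hf : ∀ j, G.Adj (f j) (f (j + 1))) (i : ℕ) :
    (d : ℕ) → G.Walk (f i) (f (i + d))
  | 0 => Walk.nil
  | d + 1 => (seqWalk G f hf i d).concat (hf (i + d))

section SeqWalk

variable {G : SimpleGraph V} {f : ℕ → V} {hf : ∀ j, G.Adj (f j) (f (j + 1))} {i : ℕ}

@[simp]
theorem length_seqWalk (d : ℕ) : (G.seqWalk f hf i d).length = d := by
  induction d with
  | zero => rfl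
  | succ d ih => simp [seqWalk, ih]

theorem mem_support_seqWalk {d : ℕ} {x : V} :
    x ∈ (G.seqWalk f hf i d).support ↔ ∃ t ≤ d, f (i + t) = x := by
  induction d with
  | zero => simp [seqWalk, eq_comm]
  | succ d ih =>
    simp only [seqWalk, Walk.support_concat, List.mem_append, List.mem_singleton, ih]
    constructor
    · rintro (⟨t, ht, rfl⟩ | rfl)
      exacts [⟨t, by omega, rfl⟩, ⟨d + 1, le_rfl, rfl⟩]
    · rintro ⟨t, ht, rfl⟩
      rcases Nat.lt_or_ge t (d + 1) with ht' | ht'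
      · exact Or.inl ⟨t, by omega, rfl⟩
      · obtain rfl : t = d + 1 := by omega
        exact Or.inr rfl

theorem mem_edges_seqWalk {d : ℕ} {e : Sym2 V} :
    e ∈ (G.seqWalk f hf i d).edges ↔ ∃ t < d, s(f (i + t), f (i + t + 1)) = e := by
  induction d with
  | zero => simp [seqWalk]
  | succ d ih =>
    simp only [seqWalk, Walk.edges_concat, List.concat_eq_append, List.mem_append,
      List.mem_singleton, ih]
    constructor
    · rintro (⟨t, ht, rfl⟩ | rfl)
      exacts [⟨t, by omega, rfl⟩, ⟨d, by omega, rfl⟩]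
    · rintro ⟨t, ht, rfl⟩
      rcases Nat.lt_or_ge t d with ht' | ht'
      · exact Or.inl ⟨t, ht', rfl⟩
      · obtain rfl : t = d := by omega
        exact Or.inr rfl

theorem isPath_seqWalk {d : ℕ} (hinj : ∀ s t, s ≤ d → t ≤ d → f (i + s) = f (i + t) → s = t) :
    (G.seqWalk f hf i d).IsPath := by
  induction d with
  | zero => exact Walk.IsPath.nil
  | succ d ih =>
    refine (ih fun s t hs ht h => hinj s t (by omega) (by omega) h).concat ?_ _
    rw [mem_support_seqWalk]
    rintro ⟨t, ht, h⟩
    have := hinj t (d + 1) (by omega) le_rfl h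
    omega

theorem toSubgraph_seqWalk_le {H : G.Subgraph} (hH : ∀ j, H.Adj (f j) (f (j + 1))) (d : ℕ) :
    (G.seqWalk f hf i d).toSubgraph ≤ H := by
  constructor
  · intro x hx
    obtain ⟨t, -, rfl⟩ := mem_support_seqWalk.mp ((Walk.mem_verts_toSubgraph _).mp hx)
    exact (hH _).fst_mem
  · intro x y hxy
    obtain ⟨t, -, h⟩ := mem_edges_seqWalk.mp (Walk.adj_toSubgraph_iff_mem_edges.mp hxy)
    rcases Sym2.eq_iff.mp h with ⟨rfl, rfl⟩ | ⟨rfl, rfl⟩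
    exacts [hH _, (hH _).symm]

end SeqWalk

namespace Walk

theorem isInduced_toSubgraph_iff {G : SimpleGraph V} {u w : V} (p : G.Walk u w) :
    p.toSubgraph.IsInduced ↔
      ∀ x ∈ p.support, ∀ y ∈ p.support, G.Adj x y → p.toSubgraph.Adj x y := by
  simp only [Subgraph.IsInduced, mem_verts_toSubgraph]

theorem ncard_setOf_mem_support_le {G : SimpleGraph V} {x y : V} (p : G.Walk x y) :
    {z | z ∈ p.support}.ncard ≤ p.length + 1 := by
  classical
  rw [← p.length_support, show {z | z ∈ p.support} = ↑p.support.toFinset by ext; simp,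
    Set.ncard_coe_finset]
  exact List.toFinset_card_le _

def cycVert {G : SimpleGraph V} {u : V} (c : G.Walk u u) (i : ℕ) : V :=
  c.getVert (i % c.length)

variable {G : SimpleGraph V} {u : V} {c : G.Walk u u}

theorem cycVert_congr {i j : ℕ} (h : i ≡ j [MOD c.length]) : c.cycVert i = c.cycVert j :=
  congrArg c.getVert h

theorem getVert_eq_cycVert {k : ℕ} (hk : k ≤ c.length) : c.getVert k = c.cycVert k := by
  rcases hk.lt_or_eq with hk | rfl
  · rw [cycVert, Nat.mod_eq_of_lt hk]
  · rw [cycVert, Nat.mod_self, getVert_length, getVert_zero]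

theorem mem_support_iff_exists_cycVert {x : V} : x ∈ c.support ↔ ∃ r, c.cycVert r = x := by
  constructor
  · intro hx
    obtain ⟨k, rfl, hk⟩ := mem_support_iff_exists_getVert.mp hx
    exact ⟨k, (getVert_eq_cycVert hk).symm⟩
  · rintro ⟨r, rfl⟩
    exact getVert_mem_support _ _

theorem IsCycle.cycVert_eq_iff (hc : c.IsCycle) {i j : ℕ} :
    c.cycVert i = c.cycVert j ↔ i ≡ j [MOD c.length] := by
  have hn : 0 < c.length := by have := hc.three_le_length; omega
  refine ⟨fun h => hc.getVert_injOn' ?_ ?_ h, cycVert_congr⟩ <;>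
    simp only [Set.mem_ofPred_eq] <;> have := Nat.mod_lt i hn <;> have := Nat.mod_lt j hn <;> omega

theorem IsCycle.add_inj_of_cycVert_eq (hc : c.IsCycle) {i s t : ℕ} (hs : s < c.length)
    (ht : t < c.length) (h : c.cycVert (i + s) = c.cycVert (i + t)) : s = t :=
  (Nat.ModEq.add_left_cancel' i (hc.cycVert_eq_iff.mp h)).eq_of_lt_of_lt hs ht

theorem IsCycle.exists_cycVert_add_eq (hc : c.IsCycle) (s : ℕ) {x : V} (hx : x ∈ c.support) :
    ∃ t < c.length, c.cycVert (s + t) = x := by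
  have hn : 0 < c.length := by have := hc.three_le_length; omega
  obtain ⟨y, rfl⟩ := mem_support_iff_exists_cycVert.mp hx
  have hs := Nat.mod_lt s hn
  refine ⟨(y + (c.length - s % c.length)) % c.length, Nat.mod_lt _ hn, cycVert_congr ?_⟩
  calc s + (y + (c.length - s % c.length)) % c.length
      ≡ s + (y + (c.length - s % c.length)) [MOD c.length] := (Nat.mod_modEq _ _).add_left s
    _ ≡ s % c.length + (y + (c.length - s % c.length)) [MOD c.length] :=
        (Nat.mod_modEq s _).symm.add_right _
    _ = y + c.length := by omega
    _ ≡ y [MOD c.length] := Nat.add_mod_right y _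

theorem IsCycle.toSubgraph_adj_cycVert_succ (hc : c.IsCycle) (i : ℕ) :
    c.toSubgraph.Adj (c.cycVert i) (c.cycVert (i + 1)) := by
  have hn : 0 < c.length := by have := hc.three_le_length; omega
  have hi := Nat.mod_lt i hn
  have h := c.toSubgraph_adj_getVert hi
  rwa [getVert_eq_cycVert (k := i % c.length + 1) (by omega),
    cycVert_congr ((Nat.mod_modEq i _).add_right 1)] at h

theorem IsCycle.modEq_of_toSubgraph_adj (hc : c.IsCycle) {s t : ℕ}
    (h : c.toSubgraph.Adj (c.cycVert s) (c.cycVert t)) :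
    s + 1 ≡ t [MOD c.length] ∨ t + 1 ≡ s [MOD c.length] := by
  obtain ⟨k, hk, hkn⟩ := (toSubgraph_adj_iff c).mp h
  rw [getVert_eq_cycVert hkn.le, getVert_eq_cycVert hkn] at hk
  rcases Sym2.eq_iff.mp hk with ⟨h1, h2⟩ | ⟨h1, h2⟩
  · rw [hc.cycVert_eq_iff] at h1 h2
    exact Or.inl ((h1.symm.add_right 1).trans h2)
  · rw [hc.cycVert_eq_iff] at h1 h2
    exact Or.inr ((h1.symm.add_right 1).trans h2)

theorem IsCycle.exists_cycVert_of_walk (hc : c.IsCycle) {x y : V}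
    (w : c.toSubgraph.spanningCoe.Walk x y) {a : ℕ} (hx : c.cycVert a = x) :
    ∃ b j, j ≤ w.length ∧ c.cycVert b = y ∧
      (b ≡ a + j [MOD c.length] ∨ b + j ≡ a [MOD c.length]) := by
  induction w generalizing a with
  | nil => exact ⟨a, 0, le_rfl, hx, Or.inl rfl⟩
  | cons h p ih =>
    subst hx
    obtain ⟨a', rfl⟩ := mem_support_iff_exists_cycVert.mp ((mem_verts_toSubgraph c).mp h.snd_mem)
    obtain ⟨b, j, hj, hb, hba'⟩ := ih rfl
    rw [length_cons]
    rcases hc.modEq_of_toSubgraph_adj h with ha | ha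
    · rcases hba' with hba' | hba'
      · refine ⟨b, j + 1, by omega, hb, Or.inl ?_⟩
        have := hba'.trans (ha.symm.add_right j)
        rwa [show a + 1 + j = a + (j + 1) by omega] at this
      · rcases j with _ | j
        · exact ⟨b, 1, by omega, hb, Or.inl (hba'.trans ha.symm)⟩
        · refine ⟨b, j, by omega, hb, Or.inr (Nat.ModEq.add_right_cancel' 1 ?_)⟩
          exact hba'.trans ha.symm
    · rcases hba' with hba' | hba'
      · rcases j with _ | j
        · exact ⟨b, 1, by omega, hb, Or.inr ((hba'.add_right 1).trans ha)⟩
        · refine ⟨b, j, by omega, hb, Or.inl (hba'.trans ?_)⟩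
          rw [show a' + (j + 1) = a' + 1 + j by omega]
          exact ha.add_right j
      · refine ⟨b, j + 1, by omega, hb, Or.inr ?_⟩
        exact (hba'.add_right 1).trans ha

theorem IsCycle.dist_cycVert_add (hc : c.IsCycle) (a : ℕ) {d : ℕ} (hd : 2 * d ≤ c.length) :
    c.toSubgraph.spanningCoe.dist (c.cycVert a) (c.cycVert (a + d)) = d := by
  have hn : 0 < c.length := by have := hc.three_le_length; omega
  let arc := c.toSubgraph.spanningCoe.seqWalk c.cycVert hc.toSubgraph_adj_cycVert_succ a d
  refine le_antisymm ((dist_le arc).trans (length_seqWalk d).le) (not_lt.mp fun hlt => ?_)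
  obtain ⟨w, hw⟩ := arc.reachable.exists_walk_length_eq_dist
  obtain ⟨b, j, hj, hb, hba⟩ := hc.exists_cycVert_of_walk w rfl
  have hbd : b ≡ a + d [MOD c.length] := hc.cycVert_eq_iff.mp hb
  rcases hba with hba | hba
  · have := (Nat.ModEq.add_left_cancel' a (hbd.symm.trans hba)).eq_of_lt_of_lt
      (by omega) (by omega)
    omega
  · have h0 : a + (d + j) ≡ a + 0 [MOD c.length] := by
      rw [← add_assoc, add_zero]
      exact (hbd.symm.add_right j).trans hba
    have := (Nat.ModEq.add_left_cancel' a h0).eq_of_lt_of_lt (by omega) hn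
    omega

theorem IsCycle.add_succ_eq_or_of_toSubgraph_adj (hc : c.IsCycle) {i s t : ℕ}
    (hs : s + 1 < c.length) (ht : t + 1 < c.length)
    (h : c.toSubgraph.Adj (c.cycVert (i + s)) (c.cycVert (i + t))) : s + 1 = t ∨ t + 1 = s := by
  rcases hc.modEq_of_toSubgraph_adj h with h | h <;> rw [add_assoc] at h
  · exact Or.inl ((Nat.ModEq.add_left_cancel' i h).eq_of_lt_of_lt hs (by omega))
  · exact Or.inr ((Nat.ModEq.add_left_cancel' i h).eq_of_lt_of_lt ht (by omega))

theorem IsPath.isCycle_cons_concat {a b v : V} {p : G.Walk a b} (hp : p.IsPath) (hab : a ≠ b)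
    (hv : v ∉ p.support) (hA : G.Adj v a) (hB : G.Adj b v) : (cons hA (p.concat hB)).IsCycle := by
  rw [cons_isCycle_iff, edges_concat]
  refine ⟨hp.concat hv _, ?_⟩
  simp only [List.concat_eq_append, List.mem_append, List.mem_singleton, not_or]
  refine ⟨fun h => hv (p.fst_mem_support_of_mem_edges h), fun h => ?_⟩
  rcases Sym2.eq_iff.mp h with ⟨rfl, -⟩ | ⟨-, rfl⟩
  exacts [hv p.end_mem_support, hab rfl]

theorem IsCycle.exists_isInduced_cycle_of_arc (hc : c.IsCycle) (hind : c.toSubgraph.IsInduced)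
    {v : V} (hv : v ∉ c.support) {i d : ℕ} (hd : 0 < d) (hdn : d + 2 ≤ c.length)
    (hA : G.Adj v (c.cycVert i)) (hB : G.Adj v (c.cycVert (i + d)))
    (hmid : ∀ t, 0 < t → t < d → ¬ G.Adj v (c.cycVert (i + t))) :
    ∃ w : G.Walk v v, w.IsCycle ∧ w.length = d + 2 ∧ w.toSubgraph.IsInduced := by
  let p := G.seqWalk c.cycVert (fun j => (hc.toSubgraph_adj_cycVert_succ j).adj_sub) i d
  have hp : p.IsPath :=
    isPath_seqWalk fun _ _ _ _ => hc.add_inj_of_cycVert_eq (by omega) (by omega)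
  have hvp : v ∉ p.support := fun h => hv <| by
    obtain ⟨t, -, h⟩ := mem_support_seqWalk.mp h
    exact mem_support_iff_exists_cycVert.mpr ⟨_, h⟩
  have hid : c.cycVert i ≠ c.cycVert (i + d) := fun h => by
    have := hc.add_inj_of_cycVert_eq (i := i) (s := 0) (by omega) (by omega) h
    omega
  let w := cons hA (p.concat hB.symm)
  have hw_adj : ∀ x y, w.toSubgraph.Adj x y ↔
      s(x, y) = s(v, c.cycVert i) ∨ s(x, y) ∈ p.edges ∨ s(x, y) = s(c.cycVert (i + d), v) := by
    intro x y
    simp only [w, adj_toSubgraph_iff_mem_edges, edges_cons, edges_concat, List.concat_eq_append,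
      List.mem_cons, List.mem_append, List.not_mem_nil, or_false]
  refine ⟨w, hp.isCycle_cons_concat hid hvp hA hB.symm, by simp [w, p], ?_⟩
  have hv_adj : ∀ t ≤ d, G.Adj v (c.cycVert (i + t)) →
      w.toSubgraph.Adj v (c.cycVert (i + t)) := by
    intro t ht hadj
    rw [hw_adj]
    rcases Nat.eq_zero_or_pos t with rfl | ht0
    · exact Or.inl rfl
    rcases ht.lt_or_eq with htd | rfl
    · exact absurd hadj (hmid t ht0 htd)
    · exact Or.inr (Or.inr Sym2.eq_swap)
  have harc_adj : ∀ s ≤ d, ∀ t ≤ d, G.Adj (c.cycVert (i + s)) (c.cycVert (i + t)) →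
      w.toSubgraph.Adj (c.cycVert (i + s)) (c.cycVert (i + t)) := by
    intro s hs t ht hadj
    have hC := hind (by simpa using mem_support_iff_exists_cycVert.mpr ⟨_, rfl⟩)
      (by simpa using mem_support_iff_exists_cycVert.mpr ⟨_, rfl⟩) hadj
    rw [hw_adj]
    rcases hc.add_succ_eq_or_of_toSubgraph_adj (by omega) (by omega) hC with rfl | rfl
    · exact Or.inr (Or.inl (mem_edges_seqWalk.mpr ⟨s, by omega, rfl⟩))
    · exact Or.inr (Or.inl (mem_edges_seqWalk.mpr ⟨t, by omega, Sym2.eq_swap⟩))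
  have hsupp : ∀ x ∈ w.support, x = v ∨ ∃ t ≤ d, c.cycVert (i + t) = x := by
    intro x hx
    simp only [w, support_cons, support_concat, List.mem_cons, List.mem_append,
      mem_support_seqWalk, p] at hx
    tauto
  rw [isInduced_toSubgraph_iff]
  intro x hx y hy hxy
  rcases hsupp x hx with rfl | ⟨s, hs, rfl⟩ <;> rcases hsupp y hy with rfl | ⟨t, ht, rfl⟩
  · exact absurd rfl hxy.ne
  · exact hv_adj t ht hxy
  · exact (hv_adj s hs hxy.symm).symm
  · exact harc_adj s hs t ht hxy

end Walk

end SimpleGraph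

open Walk

section NeighborsOnCycle

variable {G : SimpleGraph V} {u : V} {c : G.Walk u u} {v : V}

theorem gap_eq_one_or_three (h4 : C4Free G) (hc : IsLongHoleW G c)
    (hshort : ∀ (x : V) (w : G.Walk x x), IsLongHoleW G w → c.length ≤ w.length)
    (hv : v ∉ c.support) {r q : ℕ} (hq : 0 < q) (hqn : q + 3 ≤ c.length)
    (hA : G.Adj v (c.cycVert r)) (hB : G.Adj v (c.cycVert (r + q)))
    (hmid : ∀ t, 0 < t → t < q → ¬ G.Adj v (c.cycVert (r + t))) : q = 1 ∨ q = 3 := by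
  obtain ⟨hcyc, -, hind⟩ := hc
  obtain ⟨w, hw, hwlen, hwind⟩ := hcyc.exists_isInduced_cycle_of_arc
    ((isInduced_toSubgraph_iff c).mpr hind) hv hq (by omega) hA hB hmid
  rw [isInduced_toSubgraph_iff] at hwind
  by_contra hq13
  rcases (by omega : q = 2 ∨ 4 ≤ q) with rfl | hq4
  · exact h4 ⟨v, w, hw, hwlen, hwind⟩
  · have := hshort v w ⟨hw, by omega, hwind⟩
    omega

theorem mem_nbrs_iff_of_long_gap (hc : c.IsCycle) {r s : ℕ} (hr : r + 2 = s + c.length)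
    (hgap : ∀ t, 0 < t → t + 3 ≤ c.length → ¬ G.Adj v (c.cycVert (s + t))) (x : V) :
    x ∈ c.support ∧ G.Adj v x ↔ ∃ j < 3, G.Adj v (c.cycVert (r + j)) ∧ c.cycVert (r + j) = x := by
  constructor
  · rintro ⟨hx, hvx⟩
    obtain ⟨t, ht, rfl⟩ := hc.exists_cycVert_add_eq s hx
    rcases Nat.eq_zero_or_pos t with rfl | ht0
    · have hr2s : c.cycVert (r + 2) = c.cycVert (s + 0) :=
        cycVert_congr (by rw [hr, add_zero]; exact Nat.add_mod_right _ _)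
      rw [← hr2s] at hvx ⊢
      exact ⟨2, by omega, hvx, rfl⟩
    by_cases htn : t + 3 ≤ c.length
    · exact absurd hvx (hgap t ht0 htn)
    · refine ⟨t + 2 - c.length, by omega, ?_⟩
      rw [show r + (t + 2 - c.length) = s + t by omega]
      exact ⟨hvx, rfl⟩
  · rintro ⟨j, -, hvx, rfl⟩
    exact ⟨mem_support_iff_exists_cycVert.mpr ⟨_, rfl⟩, hvx⟩

theorem exists_path_eq_nbrs_of_long_gap (hc : c.IsCycle)
    (hno2 : ∀ r, G.Adj v (c.cycVert r) → G.Adj v (c.cycVert (r + 2)) →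
      G.Adj v (c.cycVert (r + 1)))
    {s : ℕ} (hs : G.Adj v (c.cycVert s))
    (hgap : ∀ t, 0 < t → t + 3 ≤ c.length → ¬ G.Adj v (c.cycVert (s + t))) :
    ∃ (a b : V) (p : G.Walk a b), p.IsPath ∧ p.length ≤ 2 ∧ p.toSubgraph ≤ c.toSubgraph ∧
      {x | x ∈ c.support ∧ G.Adj v x} = {x | x ∈ p.support} := by
  have hn : 3 ≤ c.length := hc.three_le_length
  obtain ⟨r, hr⟩ : ∃ r, r + 2 = s + c.length := ⟨s + (c.length - 2), by omega⟩
  have hwin := mem_nbrs_iff_of_long_gap hc hr hgap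
  have hr2s : c.cycVert (r + 2) = c.cycVert s :=
    cycVert_congr (by rw [hr]; exact Nat.add_mod_right _ _)
  have hr2 : G.Adj v (c.cycVert (r + 2)) := hr2s ▸ hs
  obtain ⟨a, ha, hvr⟩ : ∃ a ≤ 2, ∀ j < 3, G.Adj v (c.cycVert (r + j)) ↔ a ≤ j := by
    by_cases h0 : G.Adj v (c.cycVert (r + 0))
    · have h1 := hno2 _ h0 hr2
      exact ⟨0, by omega, fun j hj => by interval_cases j <;> simp_all⟩
    by_cases h1 : G.Adj v (c.cycVert (r + 1))
    · exact ⟨1, by omega, fun j hj => by interval_cases j <;> simp_all⟩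
    · exact ⟨2, le_rfl, fun j hj => by interval_cases j <;> simp_all⟩
  let p := G.seqWalk c.cycVert (fun j => (hc.toSubgraph_adj_cycVert_succ j).adj_sub) (r + a) (2 - a)
  refine ⟨_, _, p, isPath_seqWalk fun _ _ _ _ => hc.add_inj_of_cycVert_eq (by omega) (by omega),
    by simp [p], toSubgraph_seqWalk_le hc.toSubgraph_adj_cycVert_succ _, ?_⟩
  ext x
  simp only [Set.mem_ofPred_eq, hwin, p, mem_support_seqWalk]
  constructor
  · rintro ⟨j, hj, hvj, rfl⟩
    have := (hvr j hj).mp hvj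
    exact ⟨j - a, by omega, by rw [add_assoc, show a + (j - a) = j by omega]⟩
  · rintro ⟨t, ht, rfl⟩
    exact ⟨a + t, by omega, (hvr _ (by omega)).mpr (by omega), by rw [add_assoc]⟩

open Classical in
noncomputable def nbrIndices (c : G.Walk u u) (v : V) : List ℕ :=
  ((Finset.range c.length).filter fun r => G.Adj v (c.cycVert r)).sort (· ≤ ·)

theorem mem_nbrIndices {r : ℕ} : r ∈ nbrIndices c v ↔ r < c.length ∧ G.Adj v (c.cycVert r) := by
  simp [nbrIndices]

theorem nodup_map_nbrIndices (hc : c.IsCycle) : ((nbrIndices c v).map c.cycVert).Nodup := by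
  refine List.Nodup.map_on (fun a ha b hb h => ?_) (Finset.sort_nodup _ _)
  exact (hc.cycVert_eq_iff.mp h).eq_of_lt_of_lt (mem_nbrIndices.mp ha).1 (mem_nbrIndices.mp hb).1

theorem exists_gap_nbrIndices (hc : c.IsCycle)
    (hnext : ∀ r q, G.Adj v (c.cycVert r) → 0 < q → G.Adj v (c.cycVert (r + q)) →
      (∀ t, 0 < t → t < q → ¬ G.Adj v (c.cycVert (r + t))) → q = 1 ∨ q = 3)
    (i : ℕ) (hi : i < (nbrIndices c v).length) :
    ∃ q, (q = 1 ∨ q = 3) ∧ ((nbrIndices c v)[i] + q) % c.length =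
      (nbrIndices c v)[(i + 1) % (nbrIndices c v).length]'(Nat.mod_lt _ (by omega)) := by
  have hn0 : 0 < c.length := by have := hc.three_le_length; omega
  have hmod : ∀ r, c.cycVert (r % c.length) = c.cycVert r :=
    fun r => cycVert_congr (Nat.mod_modEq r _)
  obtain ⟨q, hq0, hql, hqt⟩ := (nbrIndices c v).exists_cyclic_gap
    (Finset.sortedLT_sort _).pairwise (fun r hr => (mem_nbrIndices.mp hr).1) i hi
  refine ⟨q, hnext _ q (mem_nbrIndices.mp (List.getElem_mem hi)).2 hq0 ?_ ?_, hql⟩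
  · rw [← hmod, hql]
    exact (mem_nbrIndices.mp (List.getElem_mem _)).2
  · intro t ht0 htq hvt
    exact hqt t ht0 htq (mem_nbrIndices.mpr ⟨Nat.mod_lt _ hn0, (hmod _).symm ▸ hvt⟩)

theorem almostDom_of_gaps_one_or_three (hc : c.IsCycle) (hn : 6 ≤ c.length) (hv : v ∉ c.support)
    (hex : ∃ r, G.Adj v (c.cycVert r))
    (hnext : ∀ r q, G.Adj v (c.cycVert r) → 0 < q → G.Adj v (c.cycVert (r + q)) →
      (∀ t, 0 < t → t < q → ¬ G.Adj v (c.cycVert (r + t))) → q = 1 ∨ q = 3) :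
    AlmostDom G c v := by
  have hn0 : 0 < c.length := by omega
  have hmod : ∀ r, c.cycVert (r % c.length) = c.cycVert r :=
    fun r => cycVert_congr (Nat.mod_modEq r _)
  obtain ⟨r, hr⟩ := hex
  have hl0 : 0 < (nbrIndices c v).length := List.length_pos_of_mem
    (mem_nbrIndices.mpr ⟨Nat.mod_lt _ hn0, (hmod r).symm ▸ hr⟩)
  refine ⟨hv, (nbrIndices c v).map c.cycVert, nodup_map_nbrIndices hc, ?_, fun x => ?_, fun i => ?_⟩
  · rw [List.length_map]
    by_contra! hlen
    obtain ⟨q, hq, hql⟩ := exists_gap_nbrIndices hc hnext 0 hl0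
    simp only [show (nbrIndices c v).length = 1 by omega, Nat.mod_self] at hql
    have h0 : (nbrIndices c v)[0] + q ≡ (nbrIndices c v)[0] + 0 [MOD c.length] := by
      rw [add_zero, Nat.ModEq, hql, Nat.mod_eq_of_lt (mem_nbrIndices.mp (List.getElem_mem _)).1]
    have := (Nat.ModEq.add_left_cancel' _ h0).eq_of_lt_of_lt (by omega) hn0
    omega
  · simp only [List.mem_map, mem_nbrIndices]
    constructor
    · rintro ⟨r, ⟨-, hvr⟩, rfl⟩
      exact ⟨mem_support_iff_exists_cycVert.mpr ⟨r, rfl⟩, hvr⟩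
    · rintro ⟨hx, hvx⟩
      obtain ⟨r, rfl⟩ := mem_support_iff_exists_cycVert.mp hx
      exact ⟨r % c.length, ⟨Nat.mod_lt _ hn0, (hmod r).symm ▸ hvx⟩, hmod r⟩
  · obtain ⟨q, hq, hql⟩ := exists_gap_nbrIndices hc hnext i (by simpa using i.isLt)
    simp only [List.get_eq_getElem, List.getElem_map, List.length_map]
    rw [← hql, hmod, distW, hc.dist_cycVert_add _ (by omega)]
    rcases hq with rfl | rfl <;> simp

end NeighborsOnCycle

theorem statement_4_general
    (G : SimpleGraph V) (h4 : C4Free G)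
    (v0 : V) (c : G.Walk v0 v0) (hc : IsLongHoleW G c)
    (hshort : ∀ (u : V) (w : G.Walk u u), IsLongHoleW G w → c.length ≤ w.length)
    (v : V) (hv : v ∉ c.support) :
    AlmostDom G c v ∨
      (({x | x ∈ c.support ∧ G.Adj v x}).ncard ≤ 3 ∧
        ({x | x ∈ c.support ∧ G.Adj v x} = ∅ ∨
          ∃ (a b : V) (p : G.Walk a b), p.IsPath ∧ p.length ≤ 2 ∧
            p.toSubgraph ≤ c.toSubgraph ∧
            {x | x ∈ c.support ∧ G.Adj v x} = {x | x ∈ p.support})) := by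
  obtain ⟨hcyc, hn, -⟩ := id hc
  have hgap := fun r q => gap_eq_one_or_three (r := r) (q := q) h4 hc hshort hv
  by_cases hlong : ∃ s, G.Adj v (c.cycVert s) ∧
      ∀ t, 0 < t → t + 3 ≤ c.length → ¬ G.Adj v (c.cycVert (s + t))
  · obtain ⟨s, hs, hst⟩ := hlong
    have hno2 : ∀ r, G.Adj v (c.cycVert r) → G.Adj v (c.cycVert (r + 2)) →
        G.Adj v (c.cycVert (r + 1)) := fun r h0 h2 => by
      by_contra h1
      have := hgap r 2 (by omega) (by omega) h0 h2 fun t ht0 ht2 => by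
        obtain rfl : t = 1 := by omega
        exact h1
      omega
    obtain ⟨a, b, p, hp, hplen, hpc, hN⟩ := exists_path_eq_nbrs_of_long_gap hcyc hno2 hs hst
    exact Or.inr ⟨hN ▸ (ncard_setOf_mem_support_le p).trans (by omega),
      Or.inr ⟨a, b, p, hp, hplen, hpc, hN⟩⟩
  by_cases hex : ∃ r, G.Adj v (c.cycVert r)
  · push Not at hlong
    refine Or.inl (almostDom_of_gaps_one_or_three hcyc hn hv hex fun r q hr hq hrq hmid => ?_)
    obtain ⟨t, ht0, htn, hvt⟩ := hlong r hr
    have : q ≤ t := not_lt.mp fun htq => hmid t ht0 htq hvt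
    exact hgap r q hq (by omega) hr hrq hmid
  · have hN : {x | x ∈ c.support ∧ G.Adj v x} = ∅ := by
      refine Set.eq_empty_of_forall_notMem fun x ⟨hx, hvx⟩ => hex ?_
      obtain ⟨r, rfl⟩ := mem_support_iff_exists_cycVert.mp hx
      exact ⟨r, hvx⟩
    exact Or.inr ⟨by simp [hN], Or.inl hN⟩

theorem statement_4
    [Fintype V] (G : SimpleGraph V) (k : ℕ) (hk : 1 ≤ k) (h4 : C4Free G)
    (v0 : V) (c : G.Walk v0 v0) (hc : IsLongHoleW G c)
    (hshort : ∀ (u : V) (w : G.Walk u u), IsLongHoleW G w → c.length ≤ w.length)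
    (hbig : muK k < (c.length : ℝ))
    (hnone : NoLongHole (G.del {x | x ∈ c.support}))
    (v : V) (hv : v ∉ c.support) :
    AlmostDom G c v ∨
      (({x | x ∈ c.support ∧ G.Adj v x}).ncard ≤ 3 ∧
        ({x | x ∈ c.support ∧ G.Adj v x} = ∅ ∨
          ∃ (a b : V) (p : G.Walk a b), p.IsPath ∧ p.length ≤ 2 ∧
            p.toSubgraph ≤ c.toSubgraph ∧
            {x | x ∈ c.support ∧ G.Adj v x} = {x | x ∈ p.support})) :=
  statement_4_general G h4 v0 c hc hshort v hv
end

section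
/- Under the standing setup, let 𝓗 = C ∪ P_1 ∪ ⋯ ∪ P_ℓ be a sparse ear decomposition in G. If F is a cycle contained in 𝓗, then the induced subgraph G[V(F)] contains a long hole. -/
open SimpleGraph

variable {V : Type}

/-!
Let `P_i` be the last ear that `F` uses: `F ⊆ C ∪ P_1 ∪ ⋯ ∪ P_i` but `F ⊄ C ∪ P_1 ∪ ⋯ ∪ P_{i-1}`.
If there is none, `F` is a cycle inside the cycle `C`, so `F = C`, which is a long hole.
Otherwise `F` contains an internal vertex of `P_i = p_0 ⋯ p_m`. At an internal vertex the only
edges of `C ∪ P_1 ∪ ⋯ ∪ P_i` are those of `P_i`, so `F` runs along the whole interior of `P_i`,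
in particular through `p_1 ⋯ p_5`. Since `P_i − {p_0, p_m}` is induced and `p_2, p_3, p_4` have no
neighbours in `C ∪ P_1 ∪ ⋯ ∪ P_{i-1}`, the only neighbours of `p_2, p_3, p_4` in `V(F)` are their
neighbours on `P_i`. Hence `p_2 p_3 p_4` together with a shortest path from `p_4` to `p_2` in
`G[V(F)] − p_3` is a hole; that path starts with `p_4 p_5`, ends with `p_1 p_2`, and `p_1 p_5` is
not an edge, so the hole has length at least `6`.
-/

namespace SimpleGraph.Walk

variable {G : SimpleGraph V}

theorem isLongHoleW_of_isChordless {v : V} {w : G.Walk v v} (hw : w.IsCycle)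
    (hlen : 6 ≤ w.length) (hch : w.IsChordless) : IsLongHoleW G w :=
  ⟨hw, hlen, fun _ hx _ hy hxy => adj_toSubgraph_iff_mem_edges.2 (hch.mem_edges hx hy hxy)⟩

theorem isChordless_of_forall_length_le {x y : V} {q : G.Walk x y}
    (hq : ∀ r : G.Walk x y, (∀ v ∈ r.support, v ∈ q.support) → q.length ≤ r.length) :
    q.IsChordless := by
  classical
  have hlen : ∀ w (hw : w ∈ q.support),
      (q.takeUntil w hw).length + (q.dropUntil w hw).length = q.length := fun w hw => by
    rw [← length_append, take_spec]
  -- shortcutting along the edge `uv` shows that `v` comes at most one step after `u`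
  have key : ∀ u v (hu : u ∈ q.support) (hv : v ∈ q.support), G.Adj u v →
      (q.takeUntil v hv).length ≤ (q.takeUntil u hu).length + 1 := by
    intro u v hu hv huv
    have := hq ((q.takeUntil u hu).append (cons huv (q.dropUntil v hv))) fun w hw => by
      rw [mem_support_append_iff, support_cons, List.mem_cons] at hw
      rcases hw with hw | hw | hw
      exacts [q.support_takeUntil_subset_support hu hw, hw ▸ hu,
        q.support_dropUntil_subset_support hv hw]
    simp only [length_append, length_cons] at this
    have := hlen v hv
    omega
  refine isChordless_iff_forall_mem_edges.2 fun u v hu hv huv => ?_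
  have h₁ := key u v hu hv huv
  have h₂ := key v u hv hu huv.symm
  have hne : (q.takeUntil u hu).length ≠ (q.takeUntil v hv).length := fun h =>
    huv.ne (by rw [← q.getVert_length_takeUntil hu, h, q.getVert_length_takeUntil hv])
  rw [← adj_toSubgraph_iff_mem_edges]
  rcases (by omega : (q.takeUntil v hv).length = (q.takeUntil u hu).length + 1 ∨
      (q.takeUntil u hu).length = (q.takeUntil v hv).length + 1) with h | h
  · have := q.toSubgraph_adj_getVert (i := (q.takeUntil u hu).length)
      (by have := hlen v hv; omega)
    rwa [← h, q.getVert_length_takeUntil, q.getVert_length_takeUntil] at this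
  · have := q.toSubgraph_adj_getVert (i := (q.takeUntil v hv).length)
      (by have := hlen u hu; omega)
    rw [← h, q.getVert_length_takeUntil, q.getVert_length_takeUntil] at this
    exact this.symm

theorem exists_isPath_isChordless_of_support_subset {x y : V} (W : Set V) (r : G.Walk x y)
    (hr : ∀ v ∈ r.support, v ∈ W) :
    ∃ q : G.Walk x y, q.IsPath ∧ q.IsChordless ∧ ∀ v ∈ q.support, v ∈ W := by
  classical
  have hex : ∃ n, ∃ r : G.Walk x y, (∀ v ∈ r.support, v ∈ W) ∧ r.length = n := ⟨_, r, hr, rfl⟩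
  obtain ⟨q, hqW, hqlen⟩ := Nat.find_spec hex
  have hmin : ∀ r : G.Walk x y, (∀ v ∈ r.support, v ∈ W) → q.length ≤ r.length :=
    fun r hr => hqlen ▸ Nat.find_min' hex ⟨r, hr, rfl⟩
  have hbW : ∀ v ∈ q.bypass.support, v ∈ W := fun v hv =>
    hqW v (q.support_bypass_subset_support hv)
  refine ⟨q.bypass, q.bypass_isPath, isChordless_of_forall_length_le fun r hr => ?_, hbW⟩
  exact q.length_bypass_le_length.trans (hmin r fun v hv => hbW v (hr v hv))

theorem support_subset_of_adj_closed {S : Set V} {x y : V} (w : G.Walk x y) (hx : x ∈ S)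
    (hS : ∀ a b, w.toSubgraph.Adj a b → a ∈ S → b ∈ S) : ∀ v ∈ w.support, v ∈ S := by
  induction w with
  | nil => simpa using hx
  | @cons x x' _ h w ih =>
    have hx' : x' ∈ S := hS x x' (by simp) hx
    simp only [support_cons, List.mem_cons, forall_eq_or_imp]
    exact ⟨hx, ih hx' fun a b hab => hS a b (by simp [hab])⟩

theorem IsCycle.neighborSet_toSubgraph_eq_of_subset {t v : V} {F : G.Walk t t} (hF : F.IsCycle)
    (hv : v ∈ F.support) {s : Set V} (hs : F.toSubgraph.neighborSet v ⊆ s) (hs₂ : s.ncard ≤ 2)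
    (hfin : s.Finite) : F.toSubgraph.neighborSet v = s :=
  Set.eq_of_subset_of_ncard_le hs (hF.ncard_neighborSet_toSubgraph_eq_two hv ▸ hs₂) hfin

theorem IsCycle.support_subset_of_toSubgraph_le {t u : V} {F : G.Walk t t} {C : G.Walk u u}
    (hF : F.IsCycle) (hC : C.IsCycle) (hle : F.toSubgraph ≤ C.toSubgraph) :
    ∀ v ∈ C.support, v ∈ F.support := by
  classical
  have hsupp : ∀ {v}, v ∈ F.support → v ∈ C.support := fun hv =>
    C.mem_verts_toSubgraph.1 (hle.1 (F.mem_verts_toSubgraph.2 hv))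
  -- at a vertex of `F`, the two `C`-neighbours are its two `F`-neighbours
  have hclosed : ∀ a b, C.toSubgraph.Adj a b → a ∈ F.support → b ∈ F.support := by
    intro a b hab ha
    have hN := hF.neighborSet_toSubgraph_eq_of_subset ha (fun _ h => hle.2 h)
      (hC.ncard_neighborSet_toSubgraph_eq_two (hsupp ha)).le (C.finite_neighborSet_toSubgraph)
    have hab' : b ∈ F.toSubgraph.neighborSet a := hN ▸ hab
    exact F.mem_verts_toSubgraph.1 (Subgraph.Adj.snd_mem hab')
  have ht : t ∈ C.support := hsupp F.start_mem_support
  intro v hv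
  have hrot : ∀ {x}, x ∈ (C.rotate t ht).support ↔ x ∈ C.support := by
    intro x
    rw [← mem_verts_toSubgraph, toSubgraph_rotate, mem_verts_toSubgraph]
  refine (C.rotate t ht).support_subset_of_adj_closed F.start_mem_support
    (fun a b hab => hclosed a b (by rwa [toSubgraph_rotate] at hab)) v (hrot.2 hv)

theorem IsCycle.exists_walk_avoiding {t v x y : V} {F : G.Walk t t} (hF : F.IsCycle)
    (hv : v ∈ F.support) (hx : F.toSubgraph.Adj v x) (hy : y ∈ F.support) (hyv : y ≠ v) :
    ∃ r : G.Walk x y, ∀ w ∈ r.support, w ∈ F.support ∧ w ≠ v := by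
  classical
  obtain ⟨F', hF', rfl, hverts⟩ :=
    (hF.rotate hv).exists_isCycle_snd_verts_eq (by rwa [toSubgraph_rotate])
  have hmem : ∀ {w}, w ∈ F'.support ↔ w ∈ F.support := by
    intro w
    rw [← mem_verts_toSubgraph, hverts, toSubgraph_rotate, mem_verts_toSubgraph]
  have htail : ∀ {w}, w ∈ F'.tail.support → w ∈ F.support := fun hw => by
    rw [support_tail_of_not_nil _ hF'.not_nil] at hw
    exact hmem.1 (List.mem_of_mem_tail hw)
  have hy' : y ∈ F'.tail.support := by
    rw [support_tail_of_not_nil _ hF'.not_nil]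
    rw [← hmem, ← cons_tail_support] at hy
    exact (List.mem_cons.1 hy).resolve_left hyv
  refine ⟨F'.tail.takeUntil y hy', fun w hw =>
    ⟨htail (support_takeUntil_subset_support _ hy' hw), ?_⟩⟩
  rintro rfl
  exact endpoint_notMem_support_takeUntil hF'.isPath_tail hy' hyv.symm hw

theorem IsPath.isLongHoleW_append {x y z : V} {q : G.Walk x z} (hq : q.IsPath)
    (hqch : q.IsChordless) (hlen : 4 ≤ q.length) (hzy : G.Adj z y) (hyx : G.Adj y x)
    (hy : y ∉ q.support) (hNy : ∀ u ∈ q.support, G.Adj y u → u = z ∨ u = x) :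
    IsLongHoleW G (q.append (cons hzy (cons hyx Walk.nil))) := by
  set Z := q.append (cons hzy (cons hyx Walk.nil))
  have hxz : x ≠ z := fun h => not_nil_iff_lt_length.2 (by omega) (hq.nil_iff_eq.2 h)
  have hx : x ∉ q.support.tail := by
    have := hq.support_nodup
    rw [← cons_tail_support] at this
    exact (List.nodup_cons.1 this).1
  have hZ : ∀ u ∈ Z.support, u = y ∨ u ∈ q.support := by
    intro u hu
    simp only [Z, mem_support_append_iff, support_cons, support_nil, List.mem_cons,
      List.not_mem_nil, or_false] at hu
    rcases hu with hu | rfl | rfl | rfl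
    exacts [Or.inr hu, Or.inr q.end_mem_support, Or.inl rfl, Or.inr q.start_mem_support]
  refine isLongHoleW_of_isChordless ?_ (by simp [Z]; omega) ?_
  · refine hq.isCycle_append (by simp [hxz.symm, hzy.ne, hyx.ne]) ?_ (Or.inr (by simp))
    intro u hu hu'
    simp only [support_cons, support_nil, List.tail_cons, List.mem_cons, List.not_mem_nil,
      or_false] at hu'
    rcases hu' with rfl | rfl
    exacts [hy (List.mem_of_mem_tail hu), hx hu]
  · -- a chord would have to meet `y`
    have hyZ : ∀ u ∈ Z.support, G.Adj y u → s(y, u) ∈ Z.edges := by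
      intro u hu hyu
      rcases hZ u hu with rfl | hu
      · exact absurd hyu (G.loopless.irrefl _)
      rcases hNy u hu hyu with rfl | rfl <;> simp [Z, Sym2.eq_swap]
    refine isChordless_iff_forall_mem_edges.2 fun u w hu hw huw => ?_
    rcases hZ u hu with rfl | hu'
    · exact hyZ w hw huw
    rcases hZ w hw with rfl | hw'
    · exact Sym2.eq_swap ▸ hyZ u hu huw.symm
    simp [Z, hqch.mem_edges hu' hw' huw]

/-- The long hole is `p₂ p₃ p₄` closed up by a shortest detour from `p₄` to `p₂` inside `F − p₃`;
the detour starts `p₄ p₅` and ends `p₁ p₂`, so it has length at least four. -/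
theorem IsCycle.exists_isLongHoleW_of_pendant {t p₁ p₂ p₃ p₄ p₅ : V} {F : G.Walk t t}
    (hF : F.IsCycle) (h₃ : p₃ ∈ F.support)
    (hN₂ : ∀ u ∈ F.support, G.Adj p₂ u → u = p₁ ∨ u = p₃)
    (hN₃ : ∀ u ∈ F.support, G.Adj p₃ u → u = p₂ ∨ u = p₄)
    (hN₄ : ∀ u ∈ F.support, G.Adj p₄ u → u = p₃ ∨ u = p₅)
    (h₁₅ : p₁ ≠ p₅) (h₂₅ : p₂ ≠ p₅) (hn₁₅ : ¬ G.Adj p₁ p₅) :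
    ∃ (u : V) (w : G.Walk u u), IsLongHoleW G w ∧ ∀ x ∈ w.support, x ∈ F.support := by
  have hN : F.toSubgraph.neighborSet p₃ = {p₂, p₄} :=
    hF.neighborSet_toSubgraph_eq_of_subset h₃
      (fun u hu => hN₃ u (F.mem_verts_toSubgraph.1 hu.snd_mem) hu.adj_sub)
      ((Set.ncard_insert_le _ _).trans (by simp)) (Set.toFinite _)
  have h₂₄ : p₂ ≠ p₄ := by
    intro h
    have := hF.ncard_neighborSet_toSubgraph_eq_two h₃
    simp [hN, h] at this
  have hF₃₂ : F.toSubgraph.Adj p₃ p₂ := by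
    rw [← Subgraph.mem_neighborSet, hN]; simp
  have hF₃₄ : F.toSubgraph.Adj p₃ p₄ := by
    rw [← Subgraph.mem_neighborSet, hN]; simp
  have h₂F : p₂ ∈ F.support := F.mem_verts_toSubgraph.1 hF₃₂.snd_mem
  have h₄F : p₄ ∈ F.support := F.mem_verts_toSubgraph.1 hF₃₄.snd_mem
  obtain ⟨r, hr⟩ := hF.exists_walk_avoiding h₃ hF₃₄ h₂F hF₃₂.ne.symm
  obtain ⟨q, hq, hqch, hqW⟩ :=
    exists_isPath_isChordless_of_support_subset {x | x ∈ F.support ∧ x ≠ p₃} r hr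
  have hqn : ¬ q.Nil := not_nil_of_ne h₂₄.symm
  have hq₅ : q.snd = p₅ :=
    (hN₄ _ (hqW _ (q.getVert_mem_support 1)).1 (q.adj_snd hqn)).resolve_left
      (hqW _ (q.getVert_mem_support 1)).2
  have hq₁ : q.penultimate = p₁ :=
    (hN₂ _ (hqW _ (q.getVert_mem_support _)).1 (q.adj_penultimate hqn).symm).resolve_right
      (hqW _ (q.getVert_mem_support _)).2
  have hlen : 4 ≤ q.length := by
    have h0 : 0 < q.length := not_nil_iff_lt_length.1 hqn
    by_contra! h
    interval_cases hl : q.length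
    · exact h₂₅ (by rw [← hq₅, snd, ← hl, getVert_length])
    · exact h₁₅ (by rw [← hq₁, ← hq₅, penultimate, hl])
    · have := q.adj_getVert_succ (i := 1) (by omega)
      exact hn₁₅ (by rw [← hq₁, ← hq₅, penultimate, hl]; exact this.symm)
  refine ⟨p₄, _, hq.isLongHoleW_append hqch hlen hF₃₂.adj_sub.symm hF₃₄.adj_sub
    (fun h => (hqW _ h).2 rfl) (fun u hu => hN₃ u (hqW u hu).1), fun x hx => ?_⟩
  simp only [mem_support_append_iff, support_cons, support_nil, List.mem_cons,
    List.not_mem_nil, or_false] at hx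
  rcases hx with hx | rfl | rfl | rfl
  exacts [(hqW x hx).1, h₂F, h₃, h₄F]

variable {t a b : V} {F : G.Walk t t} {e : G.Walk a b} {H : G.Subgraph}

theorem mem_support_of_toSubgraph_le_sup (hle : F.toSubgraph ≤ H ⊔ e.toSubgraph) {u : V}
    (hu : u ∈ F.support) (huH : u ∉ H.verts) : u ∈ e.support := by
  have := hle.1 (F.mem_verts_toSubgraph.2 hu)
  rw [Subgraph.verts_sup, Set.mem_union, mem_verts_toSubgraph] at this
  exact this.resolve_left huH

theorem IsCycle.neighborSet_getVert_of_le_sup (hF : F.IsCycle) (he : e.IsPath)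
    (hle : F.toSubgraph ≤ H ⊔ e.toSubgraph) {s : ℕ} (hs₀ : s ≠ 0) (hs : s < e.length)
    (hsH : e.getVert s ∉ H.verts) (hsF : e.getVert s ∈ F.support) :
    F.toSubgraph.neighborSet (e.getVert s) = {e.getVert (s - 1), e.getVert (s + 1)} := by
  rw [← he.neighborSet_toSubgraph_internal hs₀ hs]
  refine hF.neighborSet_toSubgraph_eq_of_subset hsF (fun u hu => ?_)
    (he.ncard_neighborSet_toSubgraph_internal_eq_two hs₀ hs).le e.finite_neighborSet_toSubgraph
  exact (Subgraph.sup_adj.1 (hle.2 hu)).resolve_left fun h => hsH h.fst_mem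

end SimpleGraph.Walk

namespace EarData

variable {G : SimpleGraph V} {v₀ : V} (d : EarData G) (c : G.Walk v₀ v₀)

theorem prev_zero : d.prev c 0 = c.toSubgraph := by
  simp [prev]

theorem prev_succ {i : ℕ} (hi : i < d.n) :
    d.prev c (i + 1) = d.prev c i ⊔ (d.ear ⟨i, hi⟩).toSubgraph := by
  simp only [prev, Nat.lt_succ_iff_lt_or_eq, iSup_or, iSup_sup_eq, sup_assoc]
  congr 2
  exact le_antisymm (iSup₂_le fun j hj => (Fin.ext hj : j = ⟨i, hi⟩) ▸ le_rfl)
    (le_iSup₂_of_le (f := fun (j : Fin d.n) (_ : (j : ℕ) = i) => (d.ear j).toSubgraph)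
      ⟨i, hi⟩ rfl le_rfl)

end EarData

namespace IsEarOf

variable {G : SimpleGraph V} {v₀ a b t : V} {c : G.Walk v₀ v₀} {H : G.Subgraph} {e : G.Walk a b}
  {F : G.Walk t t}

theorem getVert_notMem_verts (he : IsEarOf G c H e) {s : ℕ} (hs₀ : s ≠ 0) (hs : s < e.length) :
    e.getVert s ∉ H.verts := by
  obtain ⟨hpath, -, -, -, hint, -⟩ := he
  exact hint _ (e.getVert_mem_support s) (fun h => hs₀ ((hpath.getVert_eq_start_iff hs.le).1 h))
    (fun h => hs.ne ((hpath.getVert_eq_end_iff hs.le).1 h))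

theorem exists_getVert_eq (he : IsEarOf G c H e) (ha : a ∈ H.verts) {x : V} (hx : x ∈ e.support)
    (hxH : x ∉ H.verts) : ∃ s, s ≠ 0 ∧ s < e.length ∧ e.getVert s = x := by
  obtain ⟨s, rfl, hs⟩ := Walk.mem_support_iff_exists_getVert.1 hx
  refine ⟨s, fun h => hxH (by rwa [h, Walk.getVert_zero]), lt_of_le_of_ne hs fun h => hxH ?_, rfl⟩
  rw [h, Walk.getVert_length]
  exact he.2.2.2.1

theorem toSubgraph_adj_of_notMem (he : IsEarOf G c H e) (ha : a ∈ H.verts) {x y : V}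
    (hx : x ∈ e.support) (hxH : x ∉ H.verts) (hy : y ∈ e.support) (hyH : y ∉ H.verts)
    (hxy : G.Adj x y) : e.toSubgraph.Adj x y := by
  obtain ⟨-, -, -, hb, -, hind, -⟩ := he
  exact hind x hx (fun h => hxH (h ▸ ha)) (fun h => hxH (h ▸ hb)) y hy (fun h => hyH (h ▸ ha))
    (fun h => hyH (h ▸ hb)) hxy

theorem notMem_verts_of_toSubgraph_adj (he : IsEarOf G c H e) {x y : V}
    (hxy : e.toSubgraph.Adj x y) : x ∉ H.verts ∨ y ∉ H.verts := by
  obtain ⟨i, hi, hil⟩ := e.toSubgraph_adj_iff.1 hxy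
  have hm : 6 ≤ e.length := he.2.1
  -- every edge of the ear has an end among its internal vertices
  have : e.getVert i ∉ H.verts ∨ e.getVert (i + 1) ∉ H.verts := by
    rcases Nat.eq_zero_or_pos i with rfl | h
    · exact Or.inr (he.getVert_notMem_verts one_ne_zero (by omega))
    · exact Or.inl (he.getVert_notMem_verts h.ne' hil)
  rcases Sym2.eq_iff.1 hi with ⟨h₁, h₂⟩ | ⟨h₁, h₂⟩
  · rwa [h₁, h₂] at this
  · rwa [h₁, h₂, or_comm] at this

theorem exists_mem_support_notMem_verts (he : IsEarOf G c H e)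
    (hle : F.toSubgraph ≤ H ⊔ e.toSubgraph) (hnle : ¬ F.toSubgraph ≤ H) :
    ∃ x ∈ F.support, x ∉ H.verts := by
  by_contra! hFH
  refine hnle ⟨fun x hx => hFH x (F.mem_verts_toSubgraph.1 hx), fun x y hxy => ?_⟩
  refine (Subgraph.sup_adj.1 (hle.2 hxy)).resolve_right fun h => ?_
  rcases he.notMem_verts_of_toSubgraph_adj h with h' | h'
  exacts [h' (hFH x (F.mem_verts_toSubgraph.1 hxy.fst_mem)),
    h' (hFH y (F.mem_verts_toSubgraph.1 hxy.snd_mem))]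

theorem getVert_mem_support_of_le_sup (he : IsEarOf G c H e) (ha : a ∈ H.verts) (hF : F.IsCycle)
    (hle : F.toSubgraph ≤ H ⊔ e.toSubgraph) (hnle : ¬ F.toSubgraph ≤ H) {s : ℕ} (hs₀ : s ≠ 0)
    (hs : s < e.length) : e.getVert s ∈ F.support := by
  -- along the internal vertices of the ear, `F` can only continue along the ear itself
  have hstep : ∀ r, r ≠ 0 → r < e.length → e.getVert r ∈ F.support →
      e.getVert (r - 1) ∈ F.support ∧ e.getVert (r + 1) ∈ F.support := by
    intro r hr₀ hr hrF
    have hN := hF.neighborSet_getVert_of_le_sup he.1 hle hr₀ hr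
      (he.getVert_notMem_verts hr₀ hr) hrF
    have hmem : ∀ u ∈ F.toSubgraph.neighborSet (e.getVert r), u ∈ F.support :=
      fun u hu => F.mem_verts_toSubgraph.1 (Subgraph.Adj.snd_mem hu)
    exact ⟨hmem _ (by simp [hN]), hmem _ (by simp [hN])⟩
  obtain ⟨x, hxF, hxH⟩ := he.exists_mem_support_notMem_verts hle hnle
  obtain ⟨s₀, hs₀₀, hs₀, rfl⟩ :=
    he.exists_getVert_eq ha (Walk.mem_support_of_toSubgraph_le_sup hle hxF hxH) hxH
  have hup : ∀ n, s₀ + n < e.length → e.getVert (s₀ + n) ∈ F.support := by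
    intro n
    induction n with
    | zero => exact fun _ => hxF
    | succ n ih => exact fun h => (hstep _ (by omega) (by omega) (ih (by omega))).2
  have hdown : ∀ n, n < s₀ → e.getVert (s₀ - n) ∈ F.support := by
    intro n
    induction n with
    | zero => exact fun _ => hxF
    | succ n ih =>
      intro h
      have := (hstep _ (by omega) (by omega) (ih (by omega))).1
      rwa [Nat.sub_sub] at this
  rcases le_or_gt s₀ s with h | h
  · simpa [Nat.add_sub_cancel' h] using hup (s - s₀) (by omega)
  · simpa [Nat.sub_sub_self h.le] using hdown (s₀ - s) (by omega)

/-- The vertices `p₁ ⋯ p₅` of an ear traversed by `F` form a pendant path of `F`. -/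
theorem exists_isLongHoleW (he : IsEarOf G c H e) (ha : a ∈ H.verts) (hF : F.IsCycle)
    (hle : F.toSubgraph ≤ H ⊔ e.toSubgraph) (hnle : ¬ F.toSubgraph ≤ H) :
    ∃ (u : V) (w : G.Walk u u), IsLongHoleW G w ∧ ∀ x ∈ w.support, x ∈ F.support := by
  have ⟨hpath, hm, _, _, _, _, hfar⟩ := he
  have hinj : ∀ i j, i ≤ e.length → j ≤ e.length → e.getVert i = e.getVert j → i = j :=
    fun i j hi hj h => hpath.getVert_injOn hi hj h
  have hnbr : ∀ s, s ≠ 0 → s < e.length → ∀ u, e.toSubgraph.Adj (e.getVert s) u →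
      u = e.getVert (s - 1) ∨ u = e.getVert (s + 1) := fun s hs₀ hs u hu => by
    rw [← Subgraph.mem_neighborSet, hpath.neighborSet_toSubgraph_internal hs₀ hs] at hu
    simpa using hu
  have hN : ∀ s, 2 ≤ s → s ≤ 4 → ∀ u ∈ F.support, G.Adj (e.getVert s) u →
      u = e.getVert (s - 1) ∨ u = e.getVert (s + 1) := by
    intro s hs₂ hs₄ u hu hsu
    have huH : u ∉ H.verts := fun h => hfar s (by simp; omega) u h hsu
    exact hnbr s (by omega) (by omega) u (he.toSubgraph_adj_of_notMem ha (e.getVert_mem_support s)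
      (he.getVert_notMem_verts (by omega) (by omega))
      (Walk.mem_support_of_toSubgraph_le_sup hle hu huH) huH hsu)
  have hn₁₅ : ¬ G.Adj (e.getVert 1) (e.getVert 5) := by
    intro h
    rcases hnbr 1 one_ne_zero (by omega) _ (he.toSubgraph_adj_of_notMem ha
      (e.getVert_mem_support 1) (he.getVert_notMem_verts one_ne_zero (by omega))
      (e.getVert_mem_support 5) (he.getVert_notMem_verts (by omega) (by omega)) h) with h | h
    · exact absurd (hinj 5 0 (by omega) (by omega) h) (by omega)
    · exact absurd (hinj 5 2 (by omega) (by omega) h) (by omega)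
  exact hF.exists_isLongHoleW_of_pendant
    (he.getVert_mem_support_of_le_sup ha hF hle hnle (s := 3) (by omega) (by omega))
    (hN 2 le_rfl (by omega)) (hN 3 (by omega) (by omega)) (hN 4 (by omega) le_rfl)
    (fun h => absurd (hinj 1 5 (by omega) (by omega) h) (by omega))
    (fun h => absurd (hinj 2 5 (by omega) (by omega) h) (by omega)) hn₁₅

end IsEarOf

theorem statement_10_general
    (G : SimpleGraph V)
    (v0 : V) (c : G.Walk v0 v0) (hc : IsLongHoleW G c)
    (d : EarData G) (hd : IsSED G c d)
    (t : V) (F : G.Walk t t) (hF : F.IsCycle) (hFsub : F.toSubgraph ≤ d.whole c) :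
    ∃ (u : V) (w : G.Walk u u), IsLongHoleW G w ∧ ∀ x ∈ w.support, x ∈ F.support := by
  classical
  have hN : ∃ N, F.toSubgraph ≤ d.prev c N := ⟨d.n, hFsub⟩
  -- `C ∪ P₁ ∪ ⋯ ∪ P_N` is the smallest initial part of the decomposition containing `F`
  rcases hfind : Nat.find hN with _ | i
  · have hle : F.toSubgraph ≤ c.toSubgraph := d.prev_zero c ▸ hfind ▸ Nat.find_spec hN
    exact ⟨v0, c, hc, hF.support_subset_of_toSubgraph_le hc.1 hle⟩
  · have hi : i < d.n := by have := Nat.find_min' hN hFsub; omega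
    have hle := d.prev_succ c hi ▸ hfind ▸ Nat.find_spec hN
    have hnle : ¬ F.toSubgraph ≤ d.prev c i := Nat.find_min hN (by omega)
    have he := hd.2 ⟨i, hi⟩
    exact he.exists_isLongHoleW ((le_sup_left : c.toSubgraph ≤ _).1
      (c.mem_verts_toSubgraph.2 he.2.2.1)) hF hle hnle

theorem statement_10
    [Fintype V] (G : SimpleGraph V) (k : ℕ) (hk : 1 ≤ k) (h4 : C4Free G)
    (v0 : V) (c : G.Walk v0 v0) (hc : IsLongHoleW G c)
    (hshort : ∀ (u : V) (w : G.Walk u u), IsLongHoleW G w → c.length ≤ w.length)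
    (hbig : muK k < (c.length : ℝ))
    (hnone : NoLongHole (G.del {x | x ∈ c.support}))
    (d : EarData G) (hd : IsSED G c d)
    (t : V) (F : G.Walk t t) (hF : F.IsCycle) (hFsub : F.toSubgraph ≤ d.whole c) :
    ∃ (u : V) (w : G.Walk u u), IsLongHoleW G w ∧ ∀ x ∈ w.support, x ∈ F.support :=
  statement_10_general G v0 c hc d hd t F hF hFsub
end
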